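/- arXiv:math/0605183 — 2 statements merged into one kernel-verified Lean document; each statement's English description precedes it below -/
import Mathlib

section
/- For a cubic (n=3) with roots -x₁, -x₂, -x₃, D₃ = 4a₂² - 12a₃a₁ satisfies D₃ = -(1/3)·2!·Σ_σ b₁^σ b₂^σ, where the sum is over all 6 permutations σ of the roots, b₁^σ = x_{σ(2)} - x_{σ(1)}, b₂^σ = x_{σ(3)} - 2x_{σ(2)} + x_{σ(1)}, and a₃ = 1, a₂ = Σx_i, a₁ = Σ_{i<j}x_ix_j. -/
theorem stmt_17 (x : Fin 3 → ℂ) (a₂ a₁ : ℂ)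
    (ha₂ : a₂ = x 0 + x 1 + x 2)
    (ha₁ : a₁ = x 0 * x 1 + x 0 * x 2 + x 1 * x 2) :
    4 * a₂ ^ 2 - 12 * a₁ =
      -(1 / 3) * (Nat.factorial 2 : ℂ) *
        ∑ σ : Equiv.Perm (Fin 3),
          (x (σ 1) - x (σ 0)) * (x (σ 2) - 2 * x (σ 1) + x (σ 0)) := by
  subst ha₂ ha₁
  have huniv : (Finset.univ : Finset (Equiv.Perm (Fin 3))) =
      {1, Equiv.swap 0 1, Equiv.swap 0 2, Equiv.swap 1 2,
       Equiv.swap 0 1 * Equiv.swap 1 2, Equiv.swap 1 2 * Equiv.swap 0 1} := by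
    decide
  rw [huniv]
  rw [Finset.sum_insert (by decide), Finset.sum_insert (by decide),
    Finset.sum_insert (by decide), Finset.sum_insert (by decide),
    Finset.sum_insert (by decide), Finset.sum_singleton]
  rw [show ((1 : Equiv.Perm (Fin 3))) 0 = 0 from by decide,
    show ((1 : Equiv.Perm (Fin 3))) 1 = 1 from by decide,
    show ((1 : Equiv.Perm (Fin 3))) 2 = 2 from by decide,
    show (Equiv.swap 0 1 : Equiv.Perm (Fin 3)) 0 = 1 from by decide,
    show (Equiv.swap 0 1 : Equiv.Perm (Fin 3)) 1 = 0 from by decide,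
    show (Equiv.swap 0 1 : Equiv.Perm (Fin 3)) 2 = 2 from by decide,
    show (Equiv.swap 0 2 : Equiv.Perm (Fin 3)) 0 = 2 from by decide,
    show (Equiv.swap 0 2 : Equiv.Perm (Fin 3)) 1 = 1 from by decide,
    show (Equiv.swap 0 2 : Equiv.Perm (Fin 3)) 2 = 0 from by decide,
    show (Equiv.swap 1 2 : Equiv.Perm (Fin 3)) 0 = 0 from by decide,
    show (Equiv.swap 1 2 : Equiv.Perm (Fin 3)) 1 = 2 from by decide,
    show (Equiv.swap 1 2 : Equiv.Perm (Fin 3)) 2 = 1 from by decide,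
    show (Equiv.swap 0 1 * Equiv.swap 1 2 : Equiv.Perm (Fin 3)) 0 = 1 from by decide,
    show (Equiv.swap 0 1 * Equiv.swap 1 2 : Equiv.Perm (Fin 3)) 1 = 2 from by decide,
    show (Equiv.swap 0 1 * Equiv.swap 1 2 : Equiv.Perm (Fin 3)) 2 = 0 from by decide,
    show (Equiv.swap 1 2 * Equiv.swap 0 1 : Equiv.Perm (Fin 3)) 0 = 2 from by decide,
    show (Equiv.swap 1 2 * Equiv.swap 0 1 : Equiv.Perm (Fin 3)) 1 = 0 from by decide,
    show (Equiv.swap 1 2 * Equiv.swap 0 1 : Equiv.Perm (Fin 3)) 2 = 1 from by decide]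
  norm_num [Nat.factorial]
  ring
end

section
/- For the quartic (n=4), with b_i^σ the characteristic roots of permutation σ of roots x₁,…,x₄ (b₁^σ = x_{σ(2)}-x_{σ(1)}, b₂^σ = x_{σ(3)}-2x_{σ(2)}+x_{σ(1)}, b₃^σ = x_{σ(4)}-2x_{σ(3)}+x_{σ(2)}), the sum Σ_σ b₁^σ b₃^σ over all 24 permutations equals (1/3!)·D₄ = (1/6)(36a₃² - 96a₂) where a₃ = Σx_i, a₂ = Σ_{i<j}x_ix_j (monic case). -/
set_option maxHeartbeats 1600000 in
theorem stmt_19 (x : Fin 4 → ℂ) (a₃ a₂ : ℂ)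
    (ha₃ : a₃ = x 0 + x 1 + x 2 + x 3)
    (ha₂ : a₂ = x 0 * x 1 + x 0 * x 2 + x 0 * x 3 + x 1 * x 2 + x 1 * x 3 + x 2 * x 3) :
    ∑ σ : Equiv.Perm (Fin 4),
        (x (σ 1) - x (σ 0)) * (x (σ 3) - 2 * x (σ 2) + x (σ 1)) =
      (1 / (Nat.factorial 3 : ℂ)) * (36 * a₃ ^ 2 - 96 * a₂) := by
  subst ha₃ ha₂
  rw [← (Equiv.Perm.decomposeFin (n := 3)).symm.sum_comp]
  rw [Fintype.sum_prod_type]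
  simp only [← (Equiv.Perm.decomposeFin (n := 2)).symm.sum_comp, Fintype.sum_prod_type]
  simp only [← (Equiv.Perm.decomposeFin (n := 1)).symm.sum_comp, Fintype.sum_prod_type]
  simp only [Fin.sum_univ_succ, Finset.univ_unique, Finset.sum_singleton,
    show (1 : Fin 4) = Fin.succ 0 from rfl, show (2 : Fin 4) = Fin.succ 1 from rfl,
    show (3 : Fin 4) = Fin.succ 2 from rfl,
    show (1 : Fin 3) = Fin.succ 0 from rfl, show (2 : Fin 3) = Fin.succ 1 from rfl,
    show (1 : Fin 2) = Fin.succ 0 from rfl,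
    Equiv.Perm.decomposeFin_symm_apply_zero, Equiv.Perm.decomposeFin_symm_apply_succ,
    Equiv.Perm.one_apply, Equiv.swap_apply_def]
  norm_num [Fin.succ, Fin.ext_iff, Nat.factorial]
  ring
end
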